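/- Let k ∈ ℂ with k ≠ −2, and let V carry a smooth sl₂-current representation of level k. Then each Sugawara operator L_n is a well-defined linear operator on V (for every v ∈ V only finitely many summands in the defining series act nonzero on v), and for every X ∈ sl₂(ℂ) and all integers m, n one has the commutation relation [L_m, X(n)] = −n X(m+n) as operators on V. -/

import Mathlib

open LieAlgebra.SpecialLinear

noncomputable section

/-- The standard basis element `E` of sl₂(ℂ). -/
def matE : ↥(sl (Fin 2) ℂ) :=
  ⟨!![0, 1; 0, 0], by show _ ∈ LinearMap.ker (Matrix.traceLinearMap (Fin 2) ℂ ℂ); simp [Matrix.trace_fin_two]⟩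

/-- The standard basis element `H` of sl₂(ℂ). -/
def matH : ↥(sl (Fin 2) ℂ) :=
  ⟨!![1, 0; 0, -1], by show _ ∈ LinearMap.ker (Matrix.traceLinearMap (Fin 2) ℂ ℂ); simp [Matrix.trace_fin_two]⟩

/-- The standard basis element `F` of sl₂(ℂ). -/
def matF : ↥(sl (Fin 2) ℂ) :=
  ⟨!![0, 0; 1, 0], by show _ ∈ LinearMap.ker (Matrix.traceLinearMap (Fin 2) ℂ ℂ); simp [Matrix.trace_fin_two]⟩

/-- The invariant bilinear form `(X|Y) = Tr(XY)` on sl₂(ℂ). -/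
def trForm (A B : ↥(sl (Fin 2) ℂ)) : ℂ :=
  Matrix.trace ((A : Matrix (Fin 2) (Fin 2) ℂ) * (B : Matrix (Fin 2) (Fin 2) ℂ))

/-- A smooth sl₂-current representation of level `k` on a complex vector space `V`:
operators `cur X n` for `X ∈ sl₂(ℂ)`, `n ∈ ℤ`, linear in `X`, satisfying
`[X(m), Y(n)] = [X,Y](m+n) + m (X|Y) δ_{m+n,0} k·Id`, and smooth (every vector is
annihilated by all currents of sufficiently large mode). -/
structure SmoothCurrentRep (k : ℂ) (V : Type*) [AddCommGroup V] [Module ℂ V] where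
  cur : ↥(sl (Fin 2) ℂ) → ℤ → Module.End ℂ V
  cur_add : ∀ (A B : ↥(sl (Fin 2) ℂ)) (n : ℤ), cur (A + B) n = cur A n + cur B n
  cur_smul : ∀ (c : ℂ) (A : ↥(sl (Fin 2) ℂ)) (n : ℤ), cur (c • A) n = c • cur A n
  commutator : ∀ (A B : ↥(sl (Fin 2) ℂ)) (m n : ℤ),
    ⁅cur A m, cur B n⁆ = cur ⁅A, B⁆ (m + n)
      + (if m + n = 0 then (m : ℂ) * trForm A B * k else 0) • (1 : Module.End ℂ V)
  smooth : ∀ v : V, ∃ N : ℤ, ∀ (A : ↥(sl (Fin 2) ℂ)) (n : ℤ), N ≤ n → cur A n v = 0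

/-- The orthonormal basis `X₁ = H/√2`, `X₂ = (E+F)/√2`, `X₃ = i(E−F)/√2`
of sl₂(ℂ) with respect to the trace form. -/
def onb : Fin 3 → ↥(sl (Fin 2) ℂ) :=
  ![((Real.sqrt 2 : ℂ))⁻¹ • matH,
    ((Real.sqrt 2 : ℂ))⁻¹ • (matE + matF),
    (Complex.I * ((Real.sqrt 2 : ℂ))⁻¹) • (matE - matF)]

/-- The normal-ordered product `:X(m) X(l):` of two current operators. -/
def nOrd {V : Type*} [AddCommGroup V] [Module ℂ V]
    (cur : ↥(sl (Fin 2) ℂ) → ℤ → Module.End ℂ V)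
    (A : ↥(sl (Fin 2) ℂ)) (m l : ℤ) : Module.End ℂ V :=
  if m < 0 then cur A m * cur A l else cur A l * cur A m

/-- `L` is the family of Sugawara operators of a level-`k` current family `cur`:
`L n = (1/(2(k+2))) Σ_{a=1}^{3} Σ_{m∈ℤ} :X_a(m) X_a(n−m):`, where for each vector
the (finitely supported) sum over `m ∈ ℤ` is taken as a `finsum`. -/
def IsSugawara {V : Type*} [AddCommGroup V] [Module ℂ V] (k : ℂ)
    (cur : ↥(sl (Fin 2) ℂ) → ℤ → Module.End ℂ V) (L : ℤ → Module.End ℂ V) : Prop :=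
  ∀ (n : ℤ) (v : V),
    L n v = (2 * (k + 2))⁻¹ • ∑ᶠ m : ℤ, (∑ a : Fin 3, nOrd cur (onb a) m (n - m)) v


namespace Sug
open LieAlgebra.SpecialLinear Complex

@[simp] lemma coe_smul (c : ℂ) (x : ↥(sl (Fin 2) ℂ)) :
    ((c • x : ↥(sl (Fin 2) ℂ)) : Matrix (Fin 2) (Fin 2) ℂ) = c • (x : Matrix (Fin 2) (Fin 2) ℂ) := rfl
@[simp] lemma coe_add (x y : ↥(sl (Fin 2) ℂ)) :
    ((x + y : ↥(sl (Fin 2) ℂ)) : Matrix (Fin 2) (Fin 2) ℂ) = (x : Matrix (Fin 2) (Fin 2) ℂ) + y := rfl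
@[simp] lemma coe_sub (x y : ↥(sl (Fin 2) ℂ)) :
    ((x - y : ↥(sl (Fin 2) ℂ)) : Matrix (Fin 2) (Fin 2) ℂ) = (x : Matrix (Fin 2) (Fin 2) ℂ) - y := rfl
@[simp] lemma coe_bracket (x y : ↥(sl (Fin 2) ℂ)) :
    ((⁅x, y⁆ : ↥(sl (Fin 2) ℂ)) : Matrix (Fin 2) (Fin 2) ℂ)
      = (x : Matrix (Fin 2) (Fin 2) ℂ) * y - (y : Matrix (Fin 2) (Fin 2) ℂ) * x := rfl
@[simp] lemma matE_val : (matE : Matrix (Fin 2) (Fin 2) ℂ) = !![0,1;0,0] := rfl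
@[simp] lemma matH_val : (matH : Matrix (Fin 2) (Fin 2) ℂ) = !![1,0;0,-1] := rfl
@[simp] lemma matF_val : (matF : Matrix (Fin 2) (Fin 2) ℂ) = !![0,0;1,0] := rfl

lemma hs2 : (((Real.sqrt 2 : ℝ) : ℂ))⁻¹ ^ 2 = (2 : ℂ)⁻¹ := by
  rw [sq, ← mul_inv]
  norm_cast
  rw [Real.mul_self_sqrt (by norm_num)]
  norm_num

lemma trace_zero (A : ↥(sl (Fin 2) ℂ)) : (A : Matrix (Fin 2) (Fin 2) ℂ) 1 1 = - (A : Matrix (Fin 2) (Fin 2) ℂ) 0 0 := by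
  have h := A.2
  change (A : Matrix (Fin 2) (Fin 2) ℂ) ∈ LinearMap.ker (Matrix.traceLinearMap (Fin 2) ℂ ℂ) at h
  rw [LinearMap.mem_ker] at h
  have h2 : Matrix.trace (A : Matrix (Fin 2) (Fin 2) ℂ) = 0 := h
  rw [Matrix.trace_fin_two] at h2
  linear_combination h2

lemma onb_expand (A : ↥(sl (Fin 2) ℂ)) :
    trForm (onb 0) A • onb 0 + trForm (onb 1) A • onb 1 + trForm (onb 2) A • onb 2 = A := by
  have h11 := trace_zero A
  apply Subtype.ext
  show _ = (A : Matrix (Fin 2) (Fin 2) ℂ)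
  ext i j
  fin_cases i <;> fin_cases j <;>
    · simp [onb, Ring.lie_def, Matrix.sub_apply, trForm, Matrix.trace_fin_two, Matrix.mul_apply, Matrix.vecMul, dotProduct, Fin.sum_univ_two, h11]
      try ring_nf
      try simp only [Complex.I_sq, hs2]
      try ring_nf
      try simp [h11]

lemma bracket_onb0 (A : ↥(sl (Fin 2) ℂ)) :
    ⁅onb 0, A⁆ = ((A : Matrix (Fin 2) (Fin 2) ℂ) 0 1 - (A : Matrix (Fin 2) (Fin 2) ℂ) 1 0) • onb 1
      + (-Complex.I * ((A : Matrix (Fin 2) (Fin 2) ℂ) 0 1 + (A : Matrix (Fin 2) (Fin 2) ℂ) 1 0)) • onb 2 := by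
  have h11 := trace_zero A
  apply Subtype.ext
  show _ = (_ : Matrix (Fin 2) (Fin 2) ℂ)
  ext i j
  fin_cases i <;> fin_cases j <;>
    · simp [onb, Ring.lie_def, Matrix.sub_apply, Matrix.mul_apply, Matrix.vecMul, dotProduct, Fin.sum_univ_two, h11]
      try ring_nf
      try simp only [Complex.I_sq, hs2]
      try ring_nf
      try simp [h11]

lemma bracket_onb1 (A : ↥(sl (Fin 2) ℂ)) :
    ⁅onb 1, A⁆ = ((A : Matrix (Fin 2) (Fin 2) ℂ) 1 0 - (A : Matrix (Fin 2) (Fin 2) ℂ) 0 1) • onb 0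
      + (2 * (A : Matrix (Fin 2) (Fin 2) ℂ) 0 0 * Complex.I) • onb 2 := by
  have h11 := trace_zero A
  apply Subtype.ext
  show _ = (_ : Matrix (Fin 2) (Fin 2) ℂ)
  ext i j
  fin_cases i <;> fin_cases j <;>
    · simp [onb, Ring.lie_def, Matrix.sub_apply, Matrix.mul_apply, Matrix.vecMul, dotProduct, Fin.sum_univ_two, h11]
      try ring_nf
      try simp only [Complex.I_sq, hs2]
      try ring_nf
      try simp [h11]

lemma bracket_onb2 (A : ↥(sl (Fin 2) ℂ)) :
    ⁅onb 2, A⁆ = (Complex.I * ((A : Matrix (Fin 2) (Fin 2) ℂ) 0 1 + (A : Matrix (Fin 2) (Fin 2) ℂ) 1 0)) • onb 0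
      + (-(2 * (A : Matrix (Fin 2) (Fin 2) ℂ) 0 0 * Complex.I)) • onb 1 := by
  have h11 := trace_zero A
  apply Subtype.ext
  show _ = (_ : Matrix (Fin 2) (Fin 2) ℂ)
  ext i j
  fin_cases i <;> fin_cases j <;>
    · simp [onb, Ring.lie_def, Matrix.sub_apply, Matrix.mul_apply, Matrix.vecMul, dotProduct, Fin.sum_univ_two, h11]
      try ring_nf
      try simp only [Complex.I_sq, hs2]
      try ring_nf
      try simp [h11]

set_option maxHeartbeats 2000000 in
lemma casimir (A : ↥(sl (Fin 2) ℂ)) :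
    ⁅onb 0, ⁅onb 0, A⁆⁆ + ⁅onb 1, ⁅onb 1, A⁆⁆ + ⁅onb 2, ⁅onb 2, A⁆⁆ = (4:ℂ) • A := by
  have h11 := trace_zero A
  apply Subtype.ext
  show _ = (_ : Matrix (Fin 2) (Fin 2) ℂ)
  ext i j
  fin_cases i <;> fin_cases j <;>
    · simp [onb, Ring.lie_def, Matrix.sub_apply, Matrix.mul_apply, Matrix.vecMul, dotProduct, Fin.sum_univ_two, h11]
      try ring_nf
      try simp only [Complex.I_sq, hs2]
      try ring_nf
      try simp [h11]

lemma trace_br (A : ↥(sl (Fin 2) ℂ)) :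
    trForm (onb 0) ⁅onb 0, A⁆ + trForm (onb 1) ⁅onb 1, A⁆ + trForm (onb 2) ⁅onb 2, A⁆ = 0 := by
  have h11 := trace_zero A
  simp [onb, Ring.lie_def, Matrix.sub_apply, trForm, Matrix.trace_fin_two, Matrix.mul_apply, Matrix.vecMul, dotProduct,
    Fin.sum_univ_two, h11]
  ring_nf

section Ops
variable {k : ℂ} {V : Type*} [AddCommGroup V] [Module ℂ V] (R : SmoothCurrentRep k V)

lemma cc1 (A B : ↥(sl (Fin 2) ℂ)) (r n : ℤ) :
    R.cur B r * R.cur A n - R.cur A n * R.cur B r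
      = R.cur ⁅B, A⁆ (r + n) + (if r + n = 0 then (r : ℂ) * trForm B A * k else 0) • 1 := by
  have h := R.commutator B A r n
  rwa [Ring.lie_def] at h

lemma cur_eq_sum (A : ↥(sl (Fin 2) ℂ)) (r : ℤ) :
    trForm (onb 0) A • R.cur (onb 0) r + trForm (onb 1) A • R.cur (onb 1) r
      + trForm (onb 2) A • R.cur (onb 2) r = R.cur A r := by
  conv_rhs => rw [← onb_expand A]
  rw [R.cur_add, R.cur_add, R.cur_smul, R.cur_smul, R.cur_smul]

/-- `XY A w p = Σ_a X_a(p) [X_a,A](w-p)` -/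
def XY (A : ↥(sl (Fin 2) ℂ)) (w p : ℤ) : Module.End ℂ V :=
  ∑ a : Fin 3, R.cur (onb a) p * R.cur ⁅onb a, A⁆ (w - p)

def YX (A : ↥(sl (Fin 2) ℂ)) (w p : ℤ) : Module.End ℂ V :=
  ∑ a : Fin 3, R.cur ⁅onb a, A⁆ (w - p) * R.cur (onb a) p

lemma antisym (A : ↥(sl (Fin 2) ℂ)) (r s : ℤ) :
    (∑ a : Fin 3, R.cur (onb a) r * R.cur ⁅onb a, A⁆ s)
      + (∑ a : Fin 3, R.cur ⁅onb a, A⁆ r * R.cur (onb a) s) = 0 := by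
  rw [Fin.sum_univ_three, Fin.sum_univ_three, bracket_onb0, bracket_onb1, bracket_onb2]
  simp only [R.cur_add, R.cur_smul]
  simp only [add_mul, mul_add, smul_mul_assoc, mul_smul_comm]
  module

lemma XY_sub_YX (A : ↥(sl (Fin 2) ℂ)) (w p : ℤ) :
    XY R A w p - YX R A w p = (4:ℂ) • R.cur A w := by
  unfold XY YX
  rw [← Finset.sum_sub_distrib]
  have h : ∀ a : Fin 3,
      R.cur (onb a) p * R.cur ⁅onb a, A⁆ (w - p) - R.cur ⁅onb a, A⁆ (w - p) * R.cur (onb a) p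
        = R.cur ⁅onb a, ⁅onb a, A⁆⁆ w
          + (if w = 0 then (p:ℂ) * trForm (onb a) ⁅onb a, A⁆ * k else 0) • 1 := by
    intro a
    have h2 := cc1 R ⁅onb a, A⁆ (onb a) p (w - p)
    rw [show p + (w - p) = w from by ring] at h2
    exact h2
  rw [Finset.sum_congr rfl (fun a _ => h a), Finset.sum_add_distrib]
  have hz : (∑ a : Fin 3,
      (if w = 0 then (p:ℂ) * trForm (onb a) ⁅onb a, A⁆ * k else 0) • (1 : Module.End ℂ V)) = 0 := by
    by_cases hw : w = 0
    · simp only [hw, if_pos]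
      rw [Fin.sum_univ_three, ← add_smul, ← add_smul,
        show (p:ℂ) * trForm (onb 0) ⁅onb 0, A⁆ * k + (p:ℂ) * trForm (onb 1) ⁅onb 1, A⁆ * k
            + (p:ℂ) * trForm (onb 2) ⁅onb 2, A⁆ * k
          = (p:ℂ) * (trForm (onb 0) ⁅onb 0, A⁆ + trForm (onb 1) ⁅onb 1, A⁆
            + trForm (onb 2) ⁅onb 2, A⁆) * k from by ring, trace_br A]
      simp
    · simp [hw]
  rw [hz, add_zero, Fin.sum_univ_three, ← R.cur_add, ← R.cur_add, casimir A, R.cur_smul]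

lemma delta_sum (A : ↥(sl (Fin 2) ℂ)) (cond : Prop) [Decidable cond] (r : ℤ) (x : ℂ) :
    (∑ a : Fin 3, (if cond then x * trForm (onb a) A * k else 0) • R.cur (onb a) r)
      = (if cond then x * k else 0) • R.cur A r := by
  by_cases h : cond
  · simp only [if_pos h]
    rw [Fin.sum_univ_three, ← cur_eq_sum R A r]
    module
  · simp [h]

/-- The summand operators of the Sugawara series. -/
def T (n p : ℤ) : Module.End ℂ V := ∑ a : Fin 3, nOrd R.cur (onb a) p (n - p)

lemma comm_Tp (A : ↥(sl (Fin 2) ℂ)) (m n p : ℤ) :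
    T R m p * R.cur A n - R.cur A n * T R m p
      = (if p < 0 then XY R A (m+n) p - XY R A (m+n) (p+n)
          else YX R A (m+n) p - YX R A (m+n) (p+n))
        + ((if p = m + n then (-(n:ℂ)) * k else 0)
            + (if p = -n then (-(n:ℂ)) * k else 0)) • R.cur A (m+n) := by
  have leib : ∀ P Q C : Module.End ℂ V,
      P*Q*C - C*(P*Q) = P*(Q*C - C*Q) + (P*C - C*P)*Q := by intros; noncomm_ring
  have hd2 : ∀ a : Fin 3, R.cur (onb a) (m-p) * R.cur A n - R.cur A n * R.cur (onb a) (m-p)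
      = R.cur ⁅onb a, A⁆ ((m+n)-p)
        + (if p = m + n then (-(n:ℂ)) * trForm (onb a) A * k else 0) • 1 := by
    intro a
    rw [cc1 R A (onb a) (m-p) n, show m - p + n = (m+n) - p from by ring]
    congr 2
    split_ifs with h1 h2
    · rw [show ((m - p : ℤ) : ℂ) = -(n:ℂ) from by
        have e : (m - p : ℤ) = -n := by omega
        rw [e]; push_cast; ring]
    · exact absurd (by omega : p = m + n) h2
    · exact absurd (by omega : (m+n) - p = 0) h1
    · rfl
  have hd1 : ∀ a : Fin 3, R.cur (onb a) p * R.cur A n - R.cur A n * R.cur (onb a) p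
      = R.cur ⁅onb a, A⁆ (p+n)
        + (if p = -n then (-(n:ℂ)) * trForm (onb a) A * k else 0) • 1 := by
    intro a
    rw [cc1 R A (onb a) p n]
    congr 2
    split_ifs with h1 h2
    · rw [show ((p : ℤ) : ℂ) = -(n:ℂ) from by
        have e : (p : ℤ) = -n := by omega
        rw [e]; push_cast; ring]
    · exact absurd (by omega : p = -n) h2
    · exact absurd (by omega : p + n = 0) h1
    · rfl
  have e3 : (∑ a : Fin 3,
      (if p = m + n then (-(n:ℂ)) * trForm (onb a) A * k else 0) • R.cur (onb a) p)
        = (if p = m + n then (-(n:ℂ)) * k else 0) • R.cur A (m+n) := by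
    rw [delta_sum R A (p = m + n) p (-(n:ℂ))]
    split_ifs with h
    · rw [h]
    · simp
  have e4 : (∑ a : Fin 3,
      (if p = -n then (-(n:ℂ)) * trForm (onb a) A * k else 0) • R.cur (onb a) (m-p))
        = (if p = -n then (-(n:ℂ)) * k else 0) • R.cur A (m+n) := by
    rw [delta_sum R A (p = -n) (m-p) (-(n:ℂ))]
    split_ifs with h
    · rw [show m - p = m + n from by omega]
    · simp
  rcases lt_or_ge p 0 with hp | hp
  · rw [if_pos hp]
    have hT : T R m p = ∑ a : Fin 3, R.cur (onb a) p * R.cur (onb a) (m-p) :=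
      Finset.sum_congr rfl (fun a _ => by rw [nOrd, if_pos hp])
    rw [hT, Finset.sum_mul, Finset.mul_sum, ← Finset.sum_sub_distrib]
    have step : ∀ a : Fin 3,
        R.cur (onb a) p * R.cur (onb a) (m-p) * R.cur A n
          - R.cur A n * (R.cur (onb a) p * R.cur (onb a) (m-p))
        = R.cur (onb a) p * R.cur ⁅onb a, A⁆ ((m+n)-p)
          + R.cur ⁅onb a, A⁆ (p+n) * R.cur (onb a) ((m+n)-(p+n))
          + ((if p = m + n then (-(n:ℂ)) * trForm (onb a) A * k else 0) • R.cur (onb a) p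
            + (if p = -n then (-(n:ℂ)) * trForm (onb a) A * k else 0) • R.cur (onb a) (m-p)) := by
      intro a
      rw [leib, hd2 a, hd1 a, show (m+n)-(p+n) = m - p from by ring]
      simp only [mul_add, add_mul, mul_smul_comm, smul_mul_assoc, mul_one, one_mul]
      abel
    rw [Finset.sum_congr rfl (fun a _ => step a), Finset.sum_add_distrib, Finset.sum_add_distrib,
      Finset.sum_add_distrib, e3, e4]
    have e2 : (∑ a : Fin 3, R.cur ⁅onb a, A⁆ (p+n) * R.cur (onb a) ((m+n)-(p+n)))
        = - XY R A (m+n) (p+n) :=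
      eq_neg_of_add_eq_zero_right (antisym R A (p+n) ((m+n)-(p+n)))
    rw [e2]
    show XY R A (m+n) p + - XY R A (m+n) (p+n) + _ = _
    rw [add_smul]
    abel
  · rw [if_neg (by omega : ¬ p < 0)]
    have hT : T R m p = ∑ a : Fin 3, R.cur (onb a) (m-p) * R.cur (onb a) p :=
      Finset.sum_congr rfl (fun a _ => by rw [nOrd, if_neg (by omega : ¬ p < 0)])
    rw [hT, Finset.sum_mul, Finset.mul_sum, ← Finset.sum_sub_distrib]
    have step : ∀ a : Fin 3,
        R.cur (onb a) (m-p) * R.cur (onb a) p * R.cur A n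
          - R.cur A n * (R.cur (onb a) (m-p) * R.cur (onb a) p)
        = R.cur ⁅onb a, A⁆ ((m+n)-p) * R.cur (onb a) p
          + R.cur (onb a) ((m+n)-(p+n)) * R.cur ⁅onb a, A⁆ (p+n)
          + ((if p = m + n then (-(n:ℂ)) * trForm (onb a) A * k else 0) • R.cur (onb a) p
            + (if p = -n then (-(n:ℂ)) * trForm (onb a) A * k else 0) • R.cur (onb a) (m-p)) := by
      intro a
      rw [leib, hd2 a, hd1 a, show (m+n)-(p+n) = m - p from by ring]
      simp only [mul_add, add_mul, mul_smul_comm, smul_mul_assoc, mul_one, one_mul]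
      abel
    rw [Finset.sum_congr rfl (fun a _ => step a), Finset.sum_add_distrib, Finset.sum_add_distrib,
      Finset.sum_add_distrib, e3, e4]
    have e2 : (∑ a : Fin 3, R.cur (onb a) ((m+n)-(p+n)) * R.cur ⁅onb a, A⁆ (p+n))
        = - YX R A (m+n) (p+n) := by
      exact eq_neg_of_add_eq_zero_left (antisym R A ((m+n)-(p+n)) (p+n))
    rw [e2]
    show YX R A (m+n) p + - YX R A (m+n) (p+n) + _ = _
    rw [add_smul]
    abel

lemma T_vanish_big {v : V} {N : ℤ} (hv : ∀ (B : ↥(sl (Fin 2) ℂ)) (r : ℤ), N ≤ r → R.cur B r v = 0)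
    (m p : ℤ) (h0 : 0 ≤ p) (hNp : N ≤ p) : T R m p v = 0 := by
  unfold T
  rw [LinearMap.sum_apply]
  refine Finset.sum_eq_zero fun a _ => ?_
  rw [nOrd, if_neg (by omega : ¬ p < 0), Module.End.mul_apply, hv _ _ hNp, map_zero]

lemma T_vanish_small {v : V} {N : ℤ} (hv : ∀ (B : ↥(sl (Fin 2) ℂ)) (r : ℤ), N ≤ r → R.cur B r v = 0)
    (m p : ℤ) (h0 : p < 0) (hNp : N ≤ m - p) : T R m p v = 0 := by
  unfold T
  rw [LinearMap.sum_apply]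
  refine Finset.sum_eq_zero fun a _ => ?_
  rw [nOrd, if_pos h0, Module.End.mul_apply, hv _ _ hNp, map_zero]

lemma Tsupp (n : ℤ) (v : V) : (Function.support fun p => T R n p v).Finite := by
  obtain ⟨N, hN⟩ := R.smooth v
  apply Set.Finite.subset (Set.finite_Ioo (min (n - N) (-1) - 1) (max N 0 + 1))
  intro p hp
  rw [Function.mem_support] at hp
  refine Set.mem_Ioo.mpr ⟨?_, ?_⟩ <;> by_contra h <;> push_neg at h
  · exact hp (T_vanish_small R hN n p (by omega) (by omega))
  · exact hp (T_vanish_big R hN n p (by omega) (by omega))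

/-- sum over `a` with ordering cut at `c`. -/
def fcut (A : ↥(sl (Fin 2) ℂ)) (w c p : ℤ) : Module.End ℂ V :=
  if p < c then XY R A w p else YX R A w p

lemma fcut_vanish {v : V} {N : ℤ} (hv : ∀ (B : ↥(sl (Fin 2) ℂ)) (r : ℤ), N ≤ r → R.cur B r v = 0)
    (A : ↥(sl (Fin 2) ℂ)) (w c p : ℤ)
    (h : (N ≤ p ∧ c ≤ p) ∨ (p < c ∧ N ≤ w - p)) : fcut R A w c p v = 0 := by
  unfold fcut
  rcases h with ⟨h1, h2⟩ | ⟨h1, h2⟩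
  · rw [if_neg (by omega : ¬ p < c)]
    unfold YX
    rw [LinearMap.sum_apply]
    refine Finset.sum_eq_zero fun a _ => ?_
    rw [Module.End.mul_apply, hv _ _ h1, map_zero]
  · rw [if_pos h1]
    unfold XY
    rw [LinearMap.sum_apply]
    refine Finset.sum_eq_zero fun a _ => ?_
    rw [Module.End.mul_apply, hv _ _ h2, map_zero]

lemma fcut_diff (A : ↥(sl (Fin 2) ℂ)) (w n p : ℤ) :
    fcut R A w 0 p - fcut R A w n p
      = (if 0 ≤ p ∧ p < n then (-4:ℂ) else if n ≤ p ∧ p < 0 then (4:ℂ) else 0) • R.cur A w := by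
  unfold fcut
  by_cases h1 : p < 0 <;> by_cases h2 : p < n
  · rw [if_pos h1, if_pos h2, sub_self, if_neg (by omega), if_neg (by omega), zero_smul]
  · rw [if_pos h1, if_neg h2, if_neg (by omega), if_pos (by omega)]
    exact XY_sub_YX R A w p
  · rw [if_neg h1, if_pos h2, if_pos (by omega)]
    rw [← neg_sub, XY_sub_YX R A w p, ← neg_smul]
  · rw [if_neg h1, if_neg h2, sub_self, if_neg (by omega), if_neg (by omega), zero_smul]

lemma main_sum (A : ↥(sl (Fin 2) ℂ)) (m n : ℤ) (v : V) :
    ∑ᶠ p : ℤ, (T R m p * R.cur A n - R.cur A n * T R m p) v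
      = ((-(n:ℂ)) * (2*(k+2))) • R.cur A (m+n) v := by
  obtain ⟨N1, h1⟩ := R.smooth v
  obtain ⟨N2, h2⟩ := R.smooth (R.cur A n v)
  set N := max (max N1 N2) 0 with hNdef
  have hNv : ∀ (B : ↥(sl (Fin 2) ℂ)) (r : ℤ), N ≤ r → R.cur B r v = 0 :=
    fun B r hr => h1 B r (by omega)
  have hNw : ∀ (B : ↥(sl (Fin 2) ℂ)) (r : ℤ), N ≤ r → R.cur B r (R.cur A n v) = 0 :=
    fun B r hr => h2 B r (by omega)
  have hN0 : 0 ≤ N := le_max_right _ _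
  set B := (m.natAbs : ℤ) + 2*(n.natAbs : ℤ) + N + 1 with hBdef
  set S := Finset.Ioo (-B) B with hSdef
  have hsupp : (Function.support fun p => (T R m p * R.cur A n - R.cur A n * T R m p) v)
      ⊆ ↑S := by
    intro p hp
    rw [Function.mem_support] at hp
    by_contra hns
    apply hp
    have hout : p ≤ -B ∨ B ≤ p := by
      simp only [hSdef, Finset.coe_Ioo, Set.mem_Ioo] at hns
      omega
    have hTv : T R m p v = 0 := by
      rcases hout with h | h
      · exact T_vanish_small R hNv m p (by omega) (by omega)
      · exact T_vanish_big R hNv m p (by omega) (by omega)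
    have hTw : T R m p (R.cur A n v) = 0 := by
      rcases hout with h | h
      · exact T_vanish_small R hNw m p (by omega) (by omega)
      · exact T_vanish_big R hNw m p (by omega) (by omega)
    simp [LinearMap.sub_apply, Module.End.mul_apply, hTv, hTw]
  rw [finsum_eq_finset_sum_of_support_subset _ hsupp]
  have hper : ∀ p ∈ S, (T R m p * R.cur A n - R.cur A n * T R m p) v
      = ((fcut R A (m+n) 0 p) v - (fcut R A (m+n) n (p+n)) v)
        + (((if p = m + n then (-(n:ℂ)) * k else 0)
            + (if p = -n then (-(n:ℂ)) * k else 0)) • R.cur A (m+n) v) := by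
    intro p _
    rw [comm_Tp R A m n p]
    have hb : (if p < 0 then XY R A (m+n) p - XY R A (m+n) (p+n)
          else YX R A (m+n) p - YX R A (m+n) (p+n))
        = fcut R A (m+n) 0 p - fcut R A (m+n) n (p+n) := by
      unfold fcut
      by_cases h : p < 0
      · rw [if_pos h, if_pos h, if_pos (by omega : p + n < n)]
      · rw [if_neg h, if_neg h, if_neg (by omega : ¬ p + n < n)]
    rw [hb]
    simp [LinearMap.add_apply, LinearMap.sub_apply, LinearMap.smul_apply]
  rw [Finset.sum_congr rfl hper, Finset.sum_add_distrib]
  have hdelta : (∑ p ∈ S, ((if p = m + n then (-(n:ℂ)) * k else 0)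
      + (if p = -n then (-(n:ℂ)) * k else 0)) • R.cur A (m+n) v)
        = ((-(n:ℂ)) * k * 2) • R.cur A (m+n) v := by
    have hmem1 : m + n ∈ S := by
      simp only [hSdef, Finset.mem_Ioo]; omega
    have hmem2 : -n ∈ S := by
      simp only [hSdef, Finset.mem_Ioo]; omega
    simp only [add_smul]
    rw [Finset.sum_add_distrib]
    simp only [ite_smul, zero_smul]
    rw [Finset.sum_ite_eq' S (m+n), Finset.sum_ite_eq' S (-n), if_pos hmem1, if_pos hmem2,
      ← add_smul]
    module
  have hbr : (∑ p ∈ S, ((fcut R A (m+n) 0 p) v - (fcut R A (m+n) n (p+n)) v))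
      = ((-(4:ℂ))*n) • R.cur A (m+n) v := by
    rw [Finset.sum_sub_distrib]
    have hre : (∑ p ∈ S, (fcut R A (m+n) n (p+n)) v)
        = ∑ q ∈ Finset.Ioo (-B+n) (B+n), (fcut R A (m+n) n q) v := by
      rw [← Finset.map_add_right_Ioo, Finset.sum_map]
      rfl
    set U := Finset.Ioo (-B - (n.natAbs : ℤ)) (B + (n.natAbs : ℤ)) with hUdef
    have hzero : ∀ q, (q ≤ -B + (n.natAbs : ℤ) ∨ B - (n.natAbs : ℤ) ≤ q)
        → (fcut R A (m+n) n q) v = 0 := by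
      intro q hq
      apply fcut_vanish R hNv
      rcases hq with h | h
      · right; constructor <;> omega
      · left; constructor <;> omega
    have e1 : (∑ q ∈ Finset.Ioo (-B+n) (B+n), (fcut R A (m+n) n q) v)
        = ∑ q ∈ U, (fcut R A (m+n) n q) v := by
      refine Finset.sum_subset (fun x hx => ?_) (fun q hqU hq => ?_)
      · simp only [hUdef, Finset.mem_Ioo] at hx ⊢; omega
      · refine hzero q ?_
        simp only [Finset.mem_Ioo] at hq
        omega
    have e2 : (∑ q ∈ S, (fcut R A (m+n) n q) v)
        = ∑ q ∈ U, (fcut R A (m+n) n q) v := by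
      refine Finset.sum_subset (fun x hx => ?_) (fun q hqU hq => ?_)
      · simp only [hSdef, hUdef, Finset.mem_Ioo] at hx ⊢; omega
      · refine hzero q ?_
        simp only [hSdef, Finset.mem_Ioo] at hq
        omega
    rw [hre, e1, ← e2, ← Finset.sum_sub_distrib]
    have hdd : ∀ p ∈ S, (fcut R A (m+n) 0 p) v - (fcut R A (m+n) n p) v
        = (if 0 ≤ p ∧ p < n then (-4:ℂ) else if n ≤ p ∧ p < 0 then (4:ℂ) else 0)
            • R.cur A (m+n) v := by
      intro p _
      rw [← LinearMap.sub_apply, fcut_diff R A (m+n) n p, LinearMap.smul_apply]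
    rw [Finset.sum_congr rfl hdd, ← Finset.sum_smul]
    congr 1
    rcases lt_trichotomy n 0 with hn | hn | hn
    · rw [Finset.sum_congr rfl (fun p _ => if_neg (by omega : ¬ (0 ≤ p ∧ p < n)))]
      rw [← Finset.sum_filter]
      have hfil : S.filter (fun p => n ≤ p ∧ p < 0) = Finset.Ico n 0 := by
        ext x
        simp only [hSdef, Finset.mem_filter, Finset.mem_Ioo, Finset.mem_Ico]
        omega
      rw [hfil, Finset.sum_const, Int.card_Ico, nsmul_eq_mul]
      have hcast : (((0 - n).toNat : ℕ) : ℂ) = -(n:ℂ) := by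
        have h' : (((0 - n).toNat : ℕ) : ℤ) = 0 - n := Int.toNat_of_nonneg (by omega)
        have := congrArg (fun z : ℤ => (z : ℂ)) h'
        push_cast at this
        linear_combination this
      rw [hcast]
      ring
    · subst hn
      rw [Finset.sum_congr rfl (fun p _ => by
        rw [if_neg (by omega : ¬ (0 ≤ p ∧ p < 0)), if_neg (by omega : ¬ (0 ≤ p ∧ p < 0))])]
      simp
    · rw [Finset.sum_congr rfl (fun p _ => by
        rw [show (if 0 ≤ p ∧ p < n then (-4:ℂ) else if n ≤ p ∧ p < 0 then (4:ℂ) else 0)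
            = (if 0 ≤ p ∧ p < n then (-4:ℂ) else 0) from by
          by_cases h : 0 ≤ p ∧ p < n
          · rw [if_pos h, if_pos h]
          · rw [if_neg h, if_neg h, if_neg (by omega : ¬ (n ≤ p ∧ p < 0))]])]
      rw [← Finset.sum_filter]
      have hfil : S.filter (fun p => 0 ≤ p ∧ p < n) = Finset.Ico 0 n := by
        ext x
        simp only [hSdef, Finset.mem_filter, Finset.mem_Ioo, Finset.mem_Ico]
        omega
      rw [hfil, Finset.sum_const, Int.card_Ico, nsmul_eq_mul]
      have hcast : (((n - 0).toNat : ℕ) : ℂ) = (n:ℂ) := by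
        have h' : (((n - 0).toNat : ℕ) : ℤ) = n - 0 := Int.toNat_of_nonneg (by omega)
        have := congrArg (fun z : ℤ => (z : ℂ)) h'
        push_cast at this
        linear_combination this
      rw [hcast]
      ring
  rw [hbr, hdelta, ← add_smul]
  congr 1
  ring

end Ops

end Sug

/-!
STATEMENT 5: For `k ≠ −2` and a smooth sl₂-current representation of level `k`
on `V`, each Sugawara operator `L n` is a well-defined linear operator on `V`
(for every `v ∈ V` only finitely many summands of the defining series act
nonzero on `v`), and `[L m, X(n)] = −n X(m+n)` for all `X ∈ sl₂(ℂ)`, `m, n ∈ ℤ`.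
-/

theorem sugawara_well_defined_and_current_commutator
    (k : ℂ) (hk : k ≠ -2) (V : Type*) [AddCommGroup V] [Module ℂ V]
    (R : SmoothCurrentRep k V) :
    -- well-definedness: for each `n` and `v`, only finitely many summands act nonzero
    (∀ (n : ℤ) (v : V), {m : ℤ | (∑ a : Fin 3, nOrd R.cur (onb a) m (n - m)) v ≠ 0}.Finite) ∧
    -- the Sugawara operators exist as linear operators and satisfy [L_m, X(n)] = −n X(m+n)
    ∃ L : ℤ → Module.End ℂ V, IsSugawara k R.cur L ∧
      ∀ (A : ↥(sl (Fin 2) ℂ)) (m n : ℤ),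
        ⁅L m, R.cur A n⁆ = (-(n : ℂ)) • R.cur A (m + n) := by
  constructor
  · intro n v
    exact Sug.Tsupp R n v
  · have hc : (2*(k+2) : ℂ) ≠ 0 := by
      have h2 : (k+2 : ℂ) ≠ 0 := fun h => hk (by linear_combination h)
      exact mul_ne_zero two_ne_zero h2
    refine ⟨fun n =>
      { toFun := fun v => (2*(k+2))⁻¹ • ∑ᶠ p : ℤ, Sug.T R n p v
        map_add' := by
          intro v w
          simp only [map_add]
          rw [finsum_add_distrib (Sug.Tsupp R n v) (Sug.Tsupp R n w), smul_add]
        map_smul' := by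
          intro c v
          simp only [map_smul, RingHom.id_apply]
          rw [← smul_finsum' c (Sug.Tsupp R n v), smul_comm] }, fun n v => rfl, ?_⟩
    intro A m n
    apply LinearMap.ext
    intro v
    rw [Ring.lie_def]
    show (2*(k+2))⁻¹ • (∑ᶠ p : ℤ, Sug.T R m p (R.cur A n v))
        - R.cur A n ((2*(k+2))⁻¹ • ∑ᶠ p : ℤ, Sug.T R m p v) = _
    rw [map_smul]
    have hmap : R.cur A n (∑ᶠ p : ℤ, Sug.T R m p v) = ∑ᶠ p : ℤ, R.cur A n (Sug.T R m p v) :=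
      (R.cur A n).toAddMonoidHom.map_finsum (Sug.Tsupp R m v)
    rw [hmap, ← smul_sub]
    have hf2 : (Function.support fun p => R.cur A n (Sug.T R m p v)).Finite := by
      refine (Sug.Tsupp R m v).subset fun p hp => ?_
      rw [Function.mem_support] at hp ⊢
      intro h0
      exact hp (by rw [h0, map_zero])
    rw [← finsum_sub_distrib (Sug.Tsupp R m (R.cur A n v)) hf2]
    have hptw : (fun p : ℤ => Sug.T R m p (R.cur A n v) - R.cur A n (Sug.T R m p v))
        = fun p : ℤ => (Sug.T R m p * R.cur A n - R.cur A n * Sug.T R m p) v := by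
      funext p
      simp [LinearMap.sub_apply, Module.End.mul_apply]
    rw [hptw, Sug.main_sum R A m n v, smul_smul]
    show _ • R.cur A (m+n) v = (-(n:ℂ)) • R.cur A (m+n) v
    congr 1
    field_simp
    rw [mul_div_cancel_left₀ _ (right_ne_zero_of_mul hc)]

end
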